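/- For any rooted finite tree on n vertices, the iterative procedure that removes a root-to-leaf path splitting the tree into components of size at most half, and recurses on each component, terminates after at most ⌈log₂ n⌉ + 1 rounds (where in each round one path is removed from every remaining component). -/

import Mathlib

theorem pow_mul_le_of_mul_succ_le {b : ℕ} {m : ℕ → ℕ} (h : ∀ k, b * m (k + 1) ≤ m k) :
    ∀ k, b ^ k * m k ≤ m 0
  | 0 => by simp
  | k + 1 =>
    calc b ^ (k + 1) * m (k + 1) = b ^ k * (b * m (k + 1)) := by ring
      _ ≤ b ^ k * m k := Nat.mul_le_mul_left _ (h k)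
      _ ≤ m 0 := pow_mul_le_of_mul_succ_le h k

/-- The iterative procedure that, in each round, removes from every remaining
component a root-to-leaf path splitting it into components of at most half
the size, terminates after at most `⌈log₂ n⌉ + 1` rounds.  Abstractly: if
`m k` is the maximal component size after `k` rounds, with `m 0 ≤ n` and
`2 * m (k+1) ≤ m k`, then after `⌈log₂ n⌉ + 1` rounds nothing is left. -/
theorem stmt_2 (n : ℕ) (m : ℕ → ℕ) (h0 : m 0 ≤ n)
    (hhalf : ∀ k, 2 * m (k + 1) ≤ m k) :
    m (Nat.clog 2 n + 1) = 0 := by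
  set c := Nat.clog 2 n
  have hc : 2 ^ c * m c ≤ 2 ^ c * 1 := by
    rw [mul_one]
    exact ((pow_mul_le_of_mul_succ_le hhalf c).trans h0).trans (Nat.le_pow_clog one_lt_two n)
  have hmc : m c ≤ 1 := Nat.le_of_mul_le_mul_left hc (Nat.two_pow_pos c)
  have := hhalf c
  omega
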